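/- Define m_{p,q,a}(x) = 1/(1 − p·x²·g_{a,q}(x)) where g_{a,q} = 1/(1 − ax − q·x²·g_{a,q}) with constant term 1. Then the reversion of m_{p,q,a} equals m_{−p, q−p, a}: Rev(m_{p,q,a})(x) = 1/(1 + p·x²·g_{a,q−p}(x)). -/

import Mathlib

open PowerSeries

/-- Composition (substitution) of formal power series, meaningful when the
second argument has zero constant term. -/
noncomputable def psComp {K : Type*} [Field K] (f g : K⟦X⟧) : K⟦X⟧ :=
  PowerSeries.mk fun n => ∑ k ∈ Finset.range (n + 1), coeff k f * coeff n (g ^ k)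

/-- The `s`-INVERT transform: `g(x) ↦ g(x)/(1 - s·x·g(x))`. -/
noncomputable def invertT {K : Type*} [Field K] (s : K) (g : K⟦X⟧) : K⟦X⟧ :=
  g * (1 - C s * X * g)⁻¹

/-- The mean-INVERT transform: `g(x) ↦ g(x)/(1 - r·x²·g(x)²)`. -/
noncomputable def minvertT {K : Type*} [Field K] (r : K) (g : K⟦X⟧) : K⟦X⟧ :=
  g * (1 - C r * X ^ 2 * g ^ 2)⁻¹

/-! Substituting `N = x / (1 + p x² g')` for `x` in the quadratic `g = 1/(1 - a x - q x² g)` turns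
it into the quadratic satisfied by `g' · (1 + p x² g')`, where `g' = g_{a, q - p}`; since the
quadratic has only one power-series solution, `g(N) = g' (1 + p x² g')`. Hence
`1 - p N² g(N) = 1 - p x² g' / (1 + p x² g') = 1 / (1 + p x² g')`, and so
`N / (1 - p N² g(N)) = x`. -/

section

variable {K : Type*} [Field K]

theorem psComp_eq_subst {g : K⟦X⟧} (hg : constantCoeff g = 0) (f : K⟦X⟧) :
    psComp f g = f.subst g := by
  ext n
  rw [psComp, coeff_mk, coeff_subst' (HasSubst.of_constantCoeff_zero' hg)]
  refine (finsum_eq_finsetSum_of_support_subset _ fun k hk => ?_).symm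
  contrapose! hk
  rw [Finset.coe_range, Set.mem_Iio, not_lt] at hk
  simp only [Function.mem_support, not_not]
  rw [coeff_of_lt_order n ((Nat.cast_lt.mpr (Nat.lt_of_succ_le hk)).trans_le
    (le_order_pow_of_constantCoeff_eq_zero k hg)), mul_zero]

theorem eq_of_mul_one_sub_sub_mul_eq_one {u v G H : K⟦X⟧}
    (hu : constantCoeff u = 0) (hv : constantCoeff v = 0)
    (hG : G * (1 - u - v * G) = 1) (hH : H * (1 - u - v * H) = 1) : G = H := by
  have hfactor : (G - H) * (1 - u - v * (G + H)) = 0 := by linear_combination hG - hH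
  refine sub_eq_zero.mp ((mul_eq_zero.mp hfactor).resolve_right fun h => ?_)
  simpa [hu, hv] using congrArg constantCoeff h

theorem substAlgHom_C {b : K⟦X⟧} (hb : HasSubst b) (c : K) :
    substAlgHom (R := K) hb (C c) = C c := by
  simpa using (substAlgHom (R := K) hb).commutes c

theorem subst_X_mul_inv_of_quadratic {p q a : K} {G G' : K⟦X⟧}
    (hG : G * (1 - C a * X - C q * X ^ 2 * G) = 1)
    (hG' : G' * (1 - C a * X - C (q - p) * X ^ 2 * G') = 1) :
    G.subst (X * (1 + C p * X ^ 2 * G')⁻¹) = G' * (1 + C p * X ^ 2 * G') := by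
  set D : K⟦X⟧ := 1 + C p * X ^ 2 * G'
  have hD : D * D⁻¹ = 1 := PowerSeries.mul_inv_cancel _ (by simp [D])
  have hN : HasSubst (X * D⁻¹) := HasSubst.of_constantCoeff_zero' (by simp)
  rw [← coe_substAlgHom hN]
  refine eq_of_mul_one_sub_sub_mul_eq_one (u := C a * (X * D⁻¹)) (v := C q * (X * D⁻¹) ^ 2)
    (by simp) (by simp) ?_ ?_
  · simpa [substAlgHom_X, substAlgHom_C] using congrArg (substAlgHom hN) hG
  · rw [map_sub] at hG'
    linear_combination hG' + (-(C a * X * G') - C q * X ^ 2 * G' ^ 2 * (D * D⁻¹ + 1)) * hD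

end

theorem rev_free_meixner_general {K : Type*} [Field K] (p q a : K) (G G' : K⟦X⟧)
    (hG : G * (1 - C a * X - C q * X ^ 2 * G) = 1)
    (hG' : G' * (1 - C a * X - C (q - p) * X ^ 2 * G') = 1) :
    psComp (X * (1 - C p * X ^ 2 * G)⁻¹) (X * (1 + C p * X ^ 2 * G')⁻¹) = X := by
  set D : K⟦X⟧ := 1 + C p * X ^ 2 * G'
  have hD : D * D⁻¹ = 1 := PowerSeries.mul_inv_cancel _ (by simp [D])
  have hN0 : constantCoeff (X * D⁻¹) = 0 := by simp
  have hN : HasSubst (X * D⁻¹) := HasSubst.of_constantCoeff_zero' hN0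
  rw [psComp_eq_subst hN0, ← coe_substAlgHom hN]
  set φ : K⟦X⟧ →ₐ[K] K⟦X⟧ := substAlgHom hN
  have hφG : φ G = G' * D := by
    rw [coe_substAlgHom]
    exact subst_X_mul_inv_of_quadratic hG hG'
  have hφB : φ (1 - C p * X ^ 2 * G) = D⁻¹ := by
    simp only [map_sub, map_one, map_mul, map_pow, substAlgHom_X, substAlgHom_C, hφG, φ]
    linear_combination (-1 - C p * X ^ 2 * G' * D⁻¹) * hD
  have hφM : φ (X * (1 - C p * X ^ 2 * G)⁻¹) * φ (1 - C p * X ^ 2 * G) = φ X := by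
    rw [← map_mul, mul_assoc, PowerSeries.inv_mul_cancel _ (by simp), mul_one]
  rw [hφB, substAlgHom_X] at hφM
  exact mul_right_cancel₀ (right_ne_zero_of_mul_eq_one hD) hφM

theorem rev_free_meixner {K : Type*} [Field K] [CharZero K] (p q a : K) (G G' : K⟦X⟧)
    (hG0 : constantCoeff G = 1)
    (hG : G * (1 - C a * X - C q * X ^ 2 * G) = 1)
    (hG'0 : constantCoeff G' = 1)
    (hG' : G' * (1 - C a * X - C (q - p) * X ^ 2 * G') = 1) :
    psComp (X * (1 - C p * X ^ 2 * G)⁻¹) (X * (1 + C p * X ^ 2 * G')⁻¹) = X :=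
  rev_free_meixner_general p q a G G' hG hG'
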